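/- arXiv:math/0603375 — 2 statements merged into one kernel-verified Lean document; each statement's English description precedes it below -/
import Mathlib

section
/- The deformation U is a PBW-deformation of A if and only if P_1 = 0 and the Jacobi condition P_{k+1} ∩ F^kT ⊆ P_k holds for every k ≥ 1. -/
open Polynomial

noncomputable section

namespace PBWPaper

variable (K : Type*) [Field K] (s : ℕ)

/-- The free associative algebra `T = K⟨x_1,…,x_s⟩`. -/
abbrev T := FreeAlgebra K (Fin s)

/-- `V`: the span of the generators (the degree-one part of `T`). -/
def V : Submodule K (T K s) :=
  Submodule.span K (Set.range (FreeAlgebra.ι K : Fin s → T K s))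

/-- `T_i`: the span of the words of length `i`. -/
def Tgrade (i : ℕ) : Submodule K (T K s) := V K s ^ i

/-- `F^kT = ⊕_{i ≤ k} T_i`, the standard filtration of `T`. -/
def Ffilt (k : ℕ) : Submodule K (T K s) := ⨆ i ≤ k, Tgrade K s i

/-- An element of `T[z]` (with `deg z = 1`, total grading) is homogeneous of degree `n`
iff its `z^j`-coefficient lies in `T_{n-j}` for `j ≤ n` and vanishes for `j > n`. -/
def homogZ (n : ℕ) (w : Polynomial (T K s)) : Prop :=
  (∀ j ≤ n, w.coeff j ∈ Tgrade K s (n - j)) ∧ ∀ j, n < j → w.coeff j = 0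

/-- The nested subspaces `P_k` of `T`:  `P_1 = span(P ∩ F^1 T)` and
`P_k = V·P_{k-1} + P_{k-1}·V + span(P ∩ F^k T)` for `k > 1`. -/
def Pk (Pset : Set (T K s)) : ℕ → Submodule K (T K s)
  | 0 => ⊥
  | k + 1 => V K s * Pk Pset k + Pk Pset k * V K s +
      Submodule.span K (Pset ∩ (Ffilt K s (k + 1) : Set (T K s)))


variable {m : ℕ}

/-- The set of relations `P = {r_1+l_1, …, r_m+l_m}` of the deformation `U = T/⟨P⟩`. -/
def PsetOf (r l : Fin m → T K s) : Set (T K s) := Set.range fun i => r i + l i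

/-- The homogenization `h(r_i+l_i) = r_i + Σ_{j<d_i} z^{d_i-j} l_{i,j} ∈ T[z]`,
where `l_i = Σ_{j<d_i} l_{i,j}` is the decomposition of `l_i` into homogeneous components. -/
def hRel (d : Fin m → ℕ) (r : Fin m → T K s) (lc : Fin m → ℕ → T K s) (i : Fin m) :
    Polynomial (T K s) :=
  Polynomial.C (r i) + ∑ j ∈ Finset.range (d i), Polynomial.monomial (d i - j) (lc i j)

/-- The set of relations `h(P)` of the central extension `D = T[z]/⟨h(P)⟩`. -/
def hPset (d : Fin m → ℕ) (r : Fin m → T K s) (lc : Fin m → ℕ → T K s) :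
    Set (Polynomial (T K s)) := Set.range (hRel K s d r lc)

end PBWPaper

/-!
The ideal `⟨S⟩` is the increasing union of the `P_k`, so the Jacobi condition says precisely that
`⟨P⟩ ∩ F^k ⊆ P_k` for every `k`. Since `R` is homogeneous, `⟨R⟩ ∩ T_k` is the space `G_k` built
from `R` by the same recursion as the `P_k`, degree by degree. Replacing each `r_i` by `r_i + l_i`
perturbs this recursion only in lower filtration degree: `G_{k+1} ⊆ P_{k+1} + F^k` and
`P_{k+1} ⊆ G_{k+1} + F^k`. The PBW property says that the leading part of every element of
`⟨P⟩ ∩ F^{k+1}` lies in `G_{k+1}`; by the two inclusions and induction on `k` this is equivalent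
to `⟨P⟩ ∩ F^k ⊆ P_k` for all `k`.
-/

theorem FreeAlgebra.basisFreeMonoid_apply (R X : Type*) [CommSemiring R] (w : FreeMonoid X) :
    basisFreeMonoid R X w = FreeMonoid.lift (ι R) w := by
  simp [basisFreeMonoid, equivMonoidAlgebraFreeMonoid]

theorem iSupIndep.iSup_inf_le {ι α : Type*} [CompleteLattice α] [IsModularLattice α]
    {t a : ι → α} (ht : iSupIndep t) (hat : ∀ i, a i ≤ t i) (k : ι) :
    (⨆ i, a i) ⊓ t k ≤ a k := by
  rw [iSup_split_single a k, sup_inf_assoc_of_le _ (hat k)]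
  refine sup_le le_rfl ?_
  calc (⨆ (i) (_ : i ≠ k), a i) ⊓ t k ≤ (⨆ (i) (_ : i ≠ k), t i) ⊓ t k :=
        inf_le_inf_right _ (iSup₂_mono fun i _ => hat i)
    _ = ⊥ := (ht k).symm.eq_bot
    _ ≤ a k := bot_le

namespace PBWPaper

open Submodule

variable {K : Type*} [Field K] {s : ℕ}

section Grading

theorem tgrade_le_span_basisFreeMonoid (n : ℕ) :
    Tgrade K s n ≤
      span K (FreeAlgebra.basisFreeMonoid K (Fin s) '' {w | w.length = n}) := by
  induction n with
  | zero =>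
    rw [Tgrade, pow_zero, one_eq_span, span_le, Set.singleton_subset_iff]
    exact subset_span ⟨1, rfl, by simp [FreeAlgebra.basisFreeMonoid_apply]⟩
  | succ n ih =>
    have hV : V K s ≤ span K (FreeAlgebra.basisFreeMonoid K (Fin s) '' {w | w.length = 1}) :=
      span_le.2 <| Set.range_subset_iff.2 fun i =>
        subset_span ⟨FreeMonoid.of i, by simp, by simp [FreeAlgebra.basisFreeMonoid_apply]⟩
    rw [Tgrade, pow_succ]
    refine (mul_le_mul' ih hV).trans ?_
    rw [span_mul_span, span_le]
    rintro _ ⟨_, ⟨u, hu, rfl⟩, _, ⟨w, hw, rfl⟩, rfl⟩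
    refine subset_span ⟨u * w, by simp_all, ?_⟩
    simp [FreeAlgebra.basisFreeMonoid_apply]

theorem iSupIndep_tgrade : iSupIndep (Tgrade K s) := by
  intro n
  refine ((FreeAlgebra.basisFreeMonoid K (Fin s)).linearIndependent.disjoint_span_image
    (s := {w | w.length = n}) (t := {w | w.length ≠ n})
    (Set.disjoint_left.2 fun _ h h' => h' h)).mono (tgrade_le_span_basisFreeMonoid n) ?_
  refine iSup₂_le fun j hj => (tgrade_le_span_basisFreeMonoid j).trans (span_mono ?_)
  exact Set.image_mono fun w (hw : w.length = j) => show w.length ≠ n from hw ▸ hj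

theorem tgrade_le_ffilt {i k : ℕ} (h : i ≤ k) : Tgrade K s i ≤ Ffilt K s k :=
  le_iSup₂_of_le i h le_rfl

theorem ffilt_mono : Monotone (Ffilt K s) :=
  fun _ _ h => iSup₂_le fun _ hi => tgrade_le_ffilt (hi.trans h)

theorem ffilt_zero : Ffilt K s 0 = 1 :=
  le_antisymm (iSup₂_le fun i hi => by rw [Nat.le_zero.1 hi, Tgrade, pow_zero])
    (tgrade_le_ffilt (le_refl 0))

theorem ffilt_succ (k : ℕ) : Ffilt K s (k + 1) = Ffilt K s k ⊔ Tgrade K s (k + 1) :=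
  le_antisymm
    (iSup₂_le fun i hi => by
      rcases Nat.le_succ_iff.1 hi with hi | rfl
      · exact le_sup_of_le_left (tgrade_le_ffilt hi)
      · exact le_sup_right)
    (sup_le (ffilt_mono k.le_succ) (tgrade_le_ffilt le_rfl))

theorem disjoint_tgrade_ffilt {j k : ℕ} (h : j < k) : Disjoint (Tgrade K s k) (Ffilt K s j) :=
  iSupIndep_tgrade.disjoint_biSup (y := {i | i ≤ j}) (Nat.not_le.2 h)

theorem ffilt_mul_ffilt (a b : ℕ) : Ffilt K s a * Ffilt K s b ≤ Ffilt K s (a + b) := by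
  simp only [Ffilt, iSup_mul, mul_iSup, iSup_le_iff]
  intro i hi j hj
  exact (pow_add (V K s) j i).ge.trans (tgrade_le_ffilt (i := j + i) (by omega))

theorem V_eq_tgrade_one : V K s = Tgrade K s 1 := (pow_one _).symm

theorem V_mul_ffilt_le (k : ℕ) : V K s * Ffilt K s k ≤ Ffilt K s (k + 1) := by
  rw [add_comm, V_eq_tgrade_one]
  exact (mul_le_mul' (tgrade_le_ffilt le_rfl) le_rfl).trans (ffilt_mul_ffilt 1 k)

theorem ffilt_mul_V_le (k : ℕ) : Ffilt K s k * V K s ≤ Ffilt K s (k + 1) := by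
  rw [V_eq_tgrade_one]
  exact (mul_le_mul' le_rfl (tgrade_le_ffilt le_rfl)).trans (ffilt_mul_ffilt k 1)

theorem exists_mem_ffilt (x : T K s) : ∃ k, x ∈ Ffilt K s k := by
  induction x using FreeAlgebra.induction with
  | grade0 c => exact ⟨0, ffilt_zero (K := K) (s := s) ▸ mem_one.2 ⟨c, rfl⟩⟩
  | grade1 i =>
    exact ⟨1, tgrade_le_ffilt le_rfl (by rw [← V_eq_tgrade_one]; exact subset_span ⟨i, rfl⟩)⟩
  | mul a b ha hb =>
    obtain ⟨i, hi⟩ := ha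
    obtain ⟨j, hj⟩ := hb
    exact ⟨i + j, ffilt_mul_ffilt i j (mul_mem_mul hi hj)⟩
  | add a b ha hb =>
    obtain ⟨i, hi⟩ := ha
    obtain ⟨j, hj⟩ := hb
    exact ⟨max i j, add_mem (ffilt_mono (le_max_left i j) hi) (ffilt_mono (le_max_right i j) hj)⟩

end Grading

section IdealSpan

variable (S : Set (T K s))

def idealSpan : Submodule K (T K s) := (TwoSidedIdeal.span S).asIdeal.restrictScalars K

variable {S}

theorem mem_idealSpan {x : T K s} : x ∈ idealSpan S ↔ x ∈ TwoSidedIdeal.span S := by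
  simp [idealSpan]

theorem mul_idealSpan_le (N : Submodule K (T K s)) : N * idealSpan S ≤ idealSpan S :=
  mul_le.2 fun a _ x hx => mem_idealSpan.2 ((TwoSidedIdeal.span S).mul_mem_left a x
    (mem_idealSpan.1 hx))

theorem idealSpan_mul_le (N : Submodule K (T K s)) : idealSpan S * N ≤ idealSpan S :=
  mul_le.2 fun x hx a _ => mem_idealSpan.2 ((TwoSidedIdeal.span S).mul_mem_right x a
    (mem_idealSpan.1 hx))

theorem idealSpan_le {N : Submodule K (T K s)} (hVN : V K s * N ≤ N) (hNV : N * V K s ≤ N)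
    (hS : S ⊆ N) : idealSpan S ≤ N := by
  have hmul_left (a : T K s) : ∀ x ∈ N, a * x ∈ N := by
    induction a using FreeAlgebra.induction with
    | grade0 c => intro x hx; simpa [Algebra.algebraMap_eq_smul_one] using N.smul_mem c hx
    | grade1 i => exact fun x hx => hVN (mul_mem_mul (subset_span ⟨i, rfl⟩) hx)
    | mul a b ha hb => exact fun x hx => mul_assoc a b x ▸ ha _ (hb x hx)
    | add a b ha hb => exact fun x hx => add_mul a b x ▸ add_mem (ha x hx) (hb x hx)
  have hmul_right (a : T K s) : ∀ x ∈ N, x * a ∈ N := by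
    induction a using FreeAlgebra.induction with
    | grade0 c => intro x hx; simpa [Algebra.algebraMap_eq_smul_one] using N.smul_mem c hx
    | grade1 i => exact fun x hx => hNV (mul_mem_mul hx (subset_span ⟨i, rfl⟩))
    | mul a b ha hb => exact fun x hx => (mul_assoc x a b).symm ▸ hb _ (ha x hx)
    | add a b ha hb => exact fun x hx => mul_add x a b ▸ add_mem (ha x hx) (hb x hx)
  let I : TwoSidedIdeal (T K s) := .mk' N N.zero_mem N.add_mem N.neg_mem
    (hmul_left _ _) (hmul_right _ _)
  intro x hx
  exact (TwoSidedIdeal.mem_mk' _ _ _ _ _ _ _).1 ((TwoSidedIdeal.span_le (I := I)).2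
    (fun y hy => (TwoSidedIdeal.mem_mk' _ _ _ _ _ _ _).2 (hS hy)) (mem_idealSpan.1 hx))

end IdealSpan

section Pk

variable {S : Set (T K s)}

theorem pk_succ_le {k : ℕ} {M : Submodule K (T K s)} (hV : V K s * Pk K s S k ≤ M)
    (hV' : Pk K s S k * V K s ≤ M) (hS : span K (S ∩ Ffilt K s (k + 1)) ≤ M) :
    Pk K s S (k + 1) ≤ M :=
  sup_le (sup_le hV hV') hS

theorem V_mul_pk_le (k : ℕ) : V K s * Pk K s S k ≤ Pk K s S (k + 1) :=
  le_sup_of_le_left le_sup_left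

theorem pk_mul_V_le (k : ℕ) : Pk K s S k * V K s ≤ Pk K s S (k + 1) :=
  le_sup_of_le_left le_sup_right

theorem subset_pk {k : ℕ} {x : T K s} (hxS : x ∈ S) (hx : x ∈ Ffilt K s (k + 1)) :
    x ∈ Pk K s S (k + 1) :=
  le_sup_right (α := Submodule K (T K s)) (subset_span ⟨hxS, hx⟩)

theorem pk_mono : Monotone (Pk K s S) := by
  refine monotone_nat_of_le_succ fun k => ?_
  induction k with
  | zero => exact bot_le
  | succ k ih =>
    refine pk_succ_le ((mul_le_mul' le_rfl ih).trans (V_mul_pk_le _))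
      ((mul_le_mul' ih le_rfl).trans (pk_mul_V_le _)) (span_le.2 fun x hx => ?_)
    exact subset_pk hx.1 (ffilt_mono (k + 1).le_succ hx.2)

theorem pk_le_idealSpan (k : ℕ) : Pk K s S k ≤ idealSpan S := by
  induction k with
  | zero => exact bot_le
  | succ k ih =>
    exact pk_succ_le ((mul_le_mul' le_rfl ih).trans (mul_idealSpan_le _))
      ((mul_le_mul' ih le_rfl).trans (idealSpan_mul_le _))
      (span_le.2 fun _ hx => mem_idealSpan.2 (TwoSidedIdeal.subset_span hx.1))

theorem iSup_pk : ⨆ k, Pk K s S k = idealSpan S := by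
  refine le_antisymm (iSup_le pk_le_idealSpan) (idealSpan_le ?_ ?_ fun x hx => ?_)
  · rw [mul_iSup]
    exact iSup_le fun k => (V_mul_pk_le k).trans (le_iSup _ _)
  · rw [iSup_mul]
    exact iSup_le fun k => (pk_mul_V_le k).trans (le_iSup _ _)
  · obtain ⟨k, hk⟩ := exists_mem_ffilt x
    exact le_iSup (Pk K s S) (k + 1) (subset_pk hx (ffilt_mono k.le_succ hk))

theorem exists_mem_pk_of_mem_idealSpan {x : T K s} (hx : x ∈ idealSpan S) :
    ∃ k, x ∈ Pk K s S k :=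
  (mem_iSup_of_directed _ pk_mono.directed_le).1 (iSup_pk.ge hx)

theorem pk_inf_ffilt_le_of_jacobi (h : ∀ k, Pk K s S (k + 1) ⊓ Ffilt K s k ≤ Pk K s S k)
    (k n : ℕ) : Pk K s S n ⊓ Ffilt K s k ≤ Pk K s S k := by
  induction n with
  | zero => exact inf_le_left.trans bot_le
  | succ n ih =>
    rcases Nat.lt_or_ge k (n + 1) with hkn | hnk
    · have hPn := (inf_le_inf_left _ (ffilt_mono (Nat.lt_succ_iff.1 hkn))).trans (h n)
      exact (le_inf hPn inf_le_right).trans ih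
    · exact inf_le_left.trans (pk_mono hnk)

theorem jacobi_iff_idealSpan_inf_ffilt_le :
    (∀ k, Pk K s S (k + 1) ⊓ Ffilt K s k ≤ Pk K s S k) ↔
      ∀ k, idealSpan S ⊓ Ffilt K s k ≤ Pk K s S k := by
  refine ⟨fun h k x hx => ?_, fun h k => (inf_le_inf_right _ (pk_le_idealSpan _)).trans (h k)⟩
  obtain ⟨n, hn⟩ := exists_mem_pk_of_mem_idealSpan hx.1
  exact pk_inf_ffilt_le_of_jacobi h k n ⟨hn, hx.2⟩

end Pk

section HomogeneousRelations

variable {ι : Type*} (d : ι → ℕ) (r : ι → T K s)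

/-- The space `G_k`: for `r i` homogeneous of degree `d i`, the degree-`k` component of `⟨r⟩`
(`idealSpan_inf_tgrade`). -/
def idealGrade : ℕ → Submodule K (T K s)
  | 0 => span K (r '' {i | d i = 0})
  | k + 1 => V K s * idealGrade k + idealGrade k * V K s + span K (r '' {i | d i = k + 1})

variable {d r}

theorem idealGrade_succ_le {k : ℕ} {M : Submodule K (T K s)} (hV : V K s * idealGrade d r k ≤ M)
    (hV' : idealGrade d r k * V K s ≤ M) (hr : span K (r '' {i | d i = k + 1}) ≤ M) :
    idealGrade d r (k + 1) ≤ M :=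
  sup_le (sup_le hV hV') hr

theorem V_mul_idealGrade_le (k : ℕ) : V K s * idealGrade d r k ≤ idealGrade d r (k + 1) :=
  le_sup_of_le_left le_sup_left

theorem idealGrade_mul_V_le (k : ℕ) : idealGrade d r k * V K s ≤ idealGrade d r (k + 1) :=
  le_sup_of_le_left le_sup_right

theorem span_image_le_idealGrade (k : ℕ) : span K (r '' {i | d i = k}) ≤ idealGrade d r k := by
  cases k with
  | zero => exact le_rfl
  | succ k => exact le_sup_right

theorem mem_idealGrade (i : ι) : r i ∈ idealGrade d r (d i) :=
  span_image_le_idealGrade (d i) (subset_span ⟨i, rfl, rfl⟩)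

theorem idealGrade_zero_eq_bot (hd : ∀ i, d i ≠ 0) : idealGrade d r 0 = ⊥ := by
  simp [idealGrade, hd]

theorem idealGrade_one_eq_bot (hd : ∀ i, 2 ≤ d i) : idealGrade d r 1 = ⊥ := by
  have hd0 : ∀ i, d i ≠ 0 := fun i => by have := hd i; omega
  have hd1 : ∀ i, d i ≠ 1 := fun i => by have := hd i; omega
  refine le_bot_iff.1 (idealGrade_succ_le ?_ ?_ ?_) <;> simp [idealGrade_zero_eq_bot hd0, hd1]

theorem idealGrade_le_tgrade (hr : ∀ i, r i ∈ Tgrade K s (d i)) (k : ℕ) :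
    idealGrade d r k ≤ Tgrade K s k := by
  have hgen (k : ℕ) : span K (r '' {i | d i = k}) ≤ Tgrade K s k :=
    span_le.2 <| Set.image_subset_iff.2 fun i (hi : d i = k) => hi ▸ hr i
  induction k with
  | zero => exact hgen 0
  | succ k ih =>
    exact idealGrade_succ_le ((mul_le_mul' le_rfl ih).trans (pow_succ' (V K s) k).ge)
      ((mul_le_mul' ih le_rfl).trans (pow_succ (V K s) k).ge) (hgen (k + 1))

theorem idealGrade_le_idealSpan (k : ℕ) : idealGrade d r k ≤ idealSpan (Set.range r) := by
  have hgen (k : ℕ) : span K (r '' {i | d i = k}) ≤ idealSpan (Set.range r) :=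
    span_le.2 <| (Set.image_subset_range _ _).trans fun _ hx =>
      mem_idealSpan.2 (TwoSidedIdeal.subset_span hx)
  induction k with
  | zero => exact hgen 0
  | succ k ih =>
    exact idealGrade_succ_le ((mul_le_mul' le_rfl ih).trans (mul_idealSpan_le _))
      ((mul_le_mul' ih le_rfl).trans (idealSpan_mul_le _)) (hgen (k + 1))

theorem iSup_idealGrade : ⨆ k, idealGrade d r k = idealSpan (Set.range r) := by
  refine le_antisymm (iSup_le idealGrade_le_idealSpan) (idealSpan_le ?_ ?_ ?_)
  · rw [mul_iSup]
    exact iSup_le fun k => (V_mul_idealGrade_le k).trans (le_iSup _ _)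
  · rw [iSup_mul]
    exact iSup_le fun k => (idealGrade_mul_V_le k).trans (le_iSup _ _)
  · rintro _ ⟨i, rfl⟩
    exact le_iSup (idealGrade d r) (d i) (mem_idealGrade i)

theorem idealSpan_inf_tgrade (hr : ∀ i, r i ∈ Tgrade K s (d i)) (k : ℕ) :
    idealSpan (Set.range r) ⊓ Tgrade K s k = idealGrade d r k := by
  refine le_antisymm ?_ (le_inf (idealGrade_le_idealSpan k) (idealGrade_le_tgrade hr k))
  rw [← iSup_idealGrade (d := d)]
  exact iSupIndep_tgrade.iSup_inf_le (idealGrade_le_tgrade hr) k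

end HomogeneousRelations

section Deformation

variable {ι : Type*} {d : ι → ℕ} {r l : ι → T K s}

theorem V_mul_add_ffilt_le {X Y : Submodule K (T K s)} {k : ℕ} (h : V K s * X ≤ Y) :
    V K s * (X + Ffilt K s k) ≤ Y + Ffilt K s (k + 1) := by
  rw [mul_add]
  exact sup_le_sup h (V_mul_ffilt_le k)

theorem add_ffilt_mul_V_le {X Y : Submodule K (T K s)} {k : ℕ} (h : X * V K s ≤ Y) :
    (X + Ffilt K s k) * V K s ≤ Y + Ffilt K s (k + 1) := by
  rw [add_mul]
  exact sup_le_sup h (ffilt_mul_V_le k)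

variable (hr : ∀ i, r i ∈ Tgrade K s (d i)) (hl : ∀ i, l i ∈ Ffilt K s (d i - 1))
include hr hl

theorem le_of_add_mem_ffilt {i : ι} (hr0 : r i ≠ 0) {k : ℕ} (h : r i + l i ∈ Ffilt K s k) :
    d i ≤ k := by
  by_contra! hk
  have hri : r i ∈ Ffilt K s (d i - 1) := by
    simpa using sub_mem (ffilt_mono (Nat.le_sub_one_of_lt hk) h) (hl i)
  exact hr0 (disjoint_def.1 (disjoint_tgrade_ffilt (by omega)) _ (hr i) hri)

theorem pk_one_eq_bot (hd : ∀ i, 2 ≤ d i) (hr0 : ∀ i, r i ≠ 0) :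
    Pk K s (Set.range (r + l)) 1 = ⊥ := by
  refine le_bot_iff.1 (pk_succ_le (by simp [Pk]) (by simp [Pk]) (span_le.2 ?_))
  rintro _ ⟨⟨i, rfl⟩, hi⟩
  have := le_of_add_mem_ffilt hr hl (hr0 i) hi
  have := hd i
  omega

theorem idealGrade_succ_le_pk_add_ffilt (hd : ∀ i, d i ≠ 0) (k : ℕ) :
    idealGrade d r (k + 1) ≤ Pk K s (Set.range (r + l)) (k + 1) + Ffilt K s k := by
  have hgen (k : ℕ) : span K (r '' {i | d i = k + 1}) ≤
      Pk K s (Set.range (r + l)) (k + 1) + Ffilt K s k := by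
    refine span_le.2 ?_
    rintro _ ⟨i, hi : d i = k + 1, rfl⟩
    have hli : l i ∈ Ffilt K s k := by simpa [hi] using hl i
    have hP : r i + l i ∈ Pk K s (Set.range (r + l)) (k + 1) :=
      subset_pk ⟨i, rfl⟩ (add_mem (tgrade_le_ffilt hi.le (hr i)) (ffilt_mono k.le_succ hli))
    simpa using add_mem_sup hP (neg_mem hli)
  induction k with
  | zero =>
    refine idealGrade_succ_le ?_ ?_ (hgen 0) <;> simp [idealGrade_zero_eq_bot hd]
  | succ k ih =>
    exact idealGrade_succ_le ((mul_le_mul' le_rfl ih).trans (V_mul_add_ffilt_le (V_mul_pk_le _)))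
      ((mul_le_mul' ih le_rfl).trans (add_ffilt_mul_V_le (pk_mul_V_le _))) (hgen (k + 1))

theorem pk_succ_le_idealGrade_add_ffilt (hr0 : ∀ i, r i ≠ 0) (k : ℕ) :
    Pk K s (Set.range (r + l)) (k + 1) ≤ idealGrade d r (k + 1) + Ffilt K s k := by
  have hgen (k : ℕ) : span K (Set.range (r + l) ∩ Ffilt K s (k + 1)) ≤
      idealGrade d r (k + 1) + Ffilt K s k := by
    refine span_le.2 ?_
    rintro _ ⟨⟨i, rfl⟩, hi⟩
    have hli : l i ∈ Ffilt K s k :=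
      ffilt_mono (by have := le_of_add_mem_ffilt hr hl (hr0 i) hi; omega) (hl i)
    rcases (le_of_add_mem_ffilt hr hl (hr0 i) hi).eq_or_lt with hdi | hdi
    · exact add_mem_sup (hdi ▸ mem_idealGrade i) hli
    · exact mem_sup_right (add_mem (tgrade_le_ffilt (Nat.lt_succ_iff.1 hdi) (hr i)) hli)
  induction k with
  | zero => exact pk_succ_le (by simp [Pk]) (by simp [Pk]) (hgen 0)
  | succ k ih =>
    exact pk_succ_le ((mul_le_mul' le_rfl ih).trans (V_mul_add_ffilt_le (V_mul_idealGrade_le _)))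
      ((mul_le_mul' ih le_rfl).trans (add_ffilt_mul_V_le (idealGrade_mul_V_le _))) (hgen (k + 1))

end Deformation

section PBW

/-- `T/⟨P⟩` is a PBW-deformation of `T/⟨R⟩`, phrased as injectivity of `Φ : A → gr U`: the
leading homogeneous component of an element of `⟨P⟩` of degree `i ≥ 1` lies in `⟨R⟩`. -/
def IsPBW (P R : Set (T K s)) : Prop :=
  ∀ i : ℕ, 1 ≤ i → ∀ x ∈ Tgrade K s i,
    (∃ y ∈ Ffilt K s (i - 1), x + y ∈ TwoSidedIdeal.span P) → x ∈ TwoSidedIdeal.span R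

variable {ι : Type*} {d : ι → ℕ} {r l : ι → T K s}
  (hr : ∀ i, r i ∈ Tgrade K s (d i)) (hl : ∀ i, l i ∈ Ffilt K s (d i - 1))
  (hr0 : ∀ i, r i ≠ 0)
include hr hr0

theorem one_notMem_idealSpan_of_isPBW (hd : ∀ i, 2 ≤ d i)
    (h : IsPBW (Set.range (r + l)) (Set.range r)) :
    (1 : T K s) ∉ idealSpan (Set.range (r + l)) := by
  -- `1 ∈ ⟨P⟩` would put `V` into the degree-one part of `⟨R⟩`, which is zero; then every `r i`
  -- vanishes, so there are no relations at all and `⟨P⟩ = 0`.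
  intro h1
  have hV : V K s = ⊥ := by
    rw [eq_bot_iff, V_eq_tgrade_one, ← idealGrade_one_eq_bot hd (r := r),
      ← idealSpan_inf_tgrade hr]
    refine fun x hx => ⟨mem_idealSpan.2 (h 1 le_rfl x hx ⟨0, zero_mem _, ?_⟩), hx⟩
    simpa using (TwoSidedIdeal.span _).mul_mem_left x 1 (mem_idealSpan.1 h1)
  have : IsEmpty ι := ⟨fun i => hr0 i <| by
    simpa [Tgrade, hV, bot_pow (show d i ≠ 0 by have := hd i; omega)] using hr i⟩
  rw [Set.range_eq_empty] at h1
  exact one_ne_zero ((idealSpan_le (N := ⊥) (by simp) (by simp) (Set.empty_subset _) h1 :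
    (1 : T K s) ∈ (⊥ : Submodule K (T K s))))

include hl in
theorem idealSpan_inf_ffilt_le_of_isPBW (hd : ∀ i, 2 ≤ d i)
    (h : IsPBW (Set.range (r + l)) (Set.range r)) (k : ℕ) :
    idealSpan (Set.range (r + l)) ⊓ Ffilt K s k ≤ Pk K s (Set.range (r + l)) k := by
  induction k with
  | zero =>
    rintro u ⟨huI, huF⟩
    rw [ffilt_zero] at huF
    obtain ⟨c, rfl⟩ := mem_one.1 huF
    rcases eq_or_ne c 0 with rfl | hc
    · simp
    refine absurd ?_ (one_notMem_idealSpan_of_isPBW hr hr0 hd h)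
    simpa [Algebra.algebraMap_eq_smul_one, smul_smul, hc] using smul_mem _ c⁻¹ huI
  | succ k ih =>
    rintro u ⟨huI, huF⟩
    rw [SetLike.mem_coe, ffilt_succ] at huF
    obtain ⟨y, hy, x, hx, rfl⟩ := mem_sup.1 huF
    have hxR : x ∈ idealGrade d r (k + 1) := by
      rw [← idealSpan_inf_tgrade hr]
      refine ⟨mem_idealSpan.2 (h (k + 1) k.succ_pos x hx ⟨y, hy, ?_⟩), hx⟩
      exact add_comm y x ▸ mem_idealSpan.1 huI
    obtain ⟨q, hq, f, hf, rfl⟩ :=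
      mem_sup.1 (idealGrade_succ_le_pk_add_ffilt hr hl (fun i => by have := hd i; omega) k hxR)
    have hyfI : y + f ∈ idealSpan (Set.range (r + l)) := by
      simpa [add_left_comm y q f] using sub_mem huI (pk_le_idealSpan _ hq)
    have hyf : y + f ∈ Pk K s _ k := ih ⟨hyfI, add_mem hy hf⟩
    rw [add_left_comm]
    exact add_mem hq (pk_mono k.le_succ hyf)

include hl in
theorem isPBW_of_idealSpan_inf_ffilt_le
    (h : ∀ k, idealSpan (Set.range (r + l)) ⊓ Ffilt K s k ≤ Pk K s (Set.range (r + l)) k) :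
    IsPBW (Set.range (r + l)) (Set.range r) := by
  rintro i hi x hx ⟨y, hy, hxy⟩
  obtain ⟨k, rfl⟩ : ∃ k, i = k + 1 := ⟨i - 1, by omega⟩
  have hxyP := h (k + 1) ⟨mem_idealSpan.2 hxy,
    add_mem (tgrade_le_ffilt le_rfl hx) (ffilt_mono k.le_succ hy)⟩
  obtain ⟨g, hg, f, hf, hgf⟩ := mem_sup.1 (pk_succ_le_idealGrade_add_ffilt hr hl hr0 k hxyP)
  have hxg : x - g = f - y := sub_eq_sub_iff_add_eq_add.2 (by rw [← hgf, add_comm])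
  have hxg0 : x - g = 0 := disjoint_def.1 (disjoint_tgrade_ffilt k.lt_succ_self) _
    (sub_mem hx (idealGrade_le_tgrade hr _ hg)) (hxg ▸ sub_mem hf hy)
  rw [sub_eq_zero.1 hxg0]
  exact mem_idealSpan.1 (idealGrade_le_idealSpan _ hg)

include hl in
theorem isPBW_iff_idealSpan_inf_ffilt_le (hd : ∀ i, 2 ≤ d i) :
    IsPBW (Set.range (r + l)) (Set.range r) ↔
      ∀ k, idealSpan (Set.range (r + l)) ⊓ Ffilt K s k ≤ Pk K s (Set.range (r + l)) k :=
  ⟨idealSpan_inf_ffilt_le_of_isPBW hr hl hr0 hd, isPBW_of_idealSpan_inf_ffilt_le hr hl hr0⟩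

end PBW

theorem pbw_iff_jacobi (K : Type*) [Field K] (s : ℕ)
    {m : ℕ} (d : Fin m → ℕ) (r l : Fin m → T K s) (lc : Fin m → ℕ → T K s)
    -- each relation `r_i` of `A` is homogeneous of degree `d_i ≥ 2` and nonzero
    (hd : ∀ i, 2 ≤ d i)
    (hr : ∀ i, r i ∈ Tgrade K s (d i))
    (hr0 : ∀ i, r i ≠ 0)
    -- `l_i = Σ_{j < d_i} l_{i,j}` with `l_{i,j}` homogeneous of degree `j`, so `deg l_i < d_i`
    (hlc : ∀ i j, lc i j ∈ Tgrade K s j)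
    (hl : ∀ i, l i = ∑ j ∈ Finset.range (d i), lc i j) :
    -- `U` is a PBW-deformation of `A`
    (∀ i : ℕ, 1 ≤ i → ∀ x ∈ Tgrade K s i,
        (∃ y ∈ Ffilt K s (i - 1), x + y ∈ TwoSidedIdeal.span (PsetOf K s r l)) →
        x ∈ TwoSidedIdeal.span (Set.range r))
    ↔
    -- `P_1 = 0` and the Jacobi condition `P_{k+1} ∩ F^kT ⊆ P_k` holds for every `k ≥ 1`
    (Pk K s (PsetOf K s r l) 1 = ⊥ ∧
      ∀ k : ℕ, 1 ≤ k →
        Pk K s (PsetOf K s r l) (k + 1) ⊓ Ffilt K s k ≤ Pk K s (PsetOf K s r l) k) := by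
  have hl' : ∀ i, l i ∈ Ffilt K s (d i - 1) := fun i => hl i ▸
    sum_mem fun j hj => tgrade_le_ffilt (by have := Finset.mem_range.1 hj; omega) (hlc i j)
  have hP1 := pk_one_eq_bot hr hl' hd hr0
  refine (isPBW_iff_idealSpan_inf_ffilt_le hr hl' hr0 hd).trans
    (jacobi_iff_idealSpan_inf_ffilt_le.symm.trans ⟨fun h => ⟨hP1, fun k _ => h k⟩, ?_⟩)
  rintro ⟨-, h⟩ (_ | k)
  · simp [hP1]
  · exact h (k + 1) k.succ_pos

end PBWPaper
end
end

section
/- Let T = K⟨x, y, w⟩ and P = {x²y − w, y³ − w}. Then the element x²w − wy² lies in the two-sided ideal ⟨P⟩ of T (indeed x²w − wy² = (x²y − w)y² − x²(y³ − w)), but x²w − wy² does not lie in P_3, which here equals the K-span of {x²y − w, y³ − w}. In particular P_3 ≠ ⟨P⟩ ∩ F³T. -/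
open Polynomial

noncomputable section

namespace PBWPaper

variable (K : Type*) [Field K] (s : ℕ)

/-! ### Auxiliary lemmas -/

lemma iota_mem_V (i : Fin s) : FreeAlgebra.ι K i ∈ V K s :=
  Submodule.subset_span ⟨i, rfl⟩

lemma Tgrade_le_Ffilt (i k : ℕ) (h : i ≤ k) : Tgrade K s i ≤ Ffilt K s k :=
  le_iSup₂_of_le i h le_rfl

lemma mem_Tgrade_three {a b c : T K s} (ha : a ∈ V K s) (hb : b ∈ V K s)
    (hc : c ∈ V K s) : a * b * c ∈ Tgrade K s 3 := by
  have h1 : (V K s) ^ 3 = (V K s * V K s) * V K s := by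
    rw [pow_succ, pow_two]
  rw [Tgrade, h1]
  exact Submodule.mul_mem_mul (Submodule.mul_mem_mul ha hb) hc

lemma mem_Tgrade_one {a : T K s} (ha : a ∈ V K s) : a ∈ Tgrade K s 1 := by
  rw [Tgrade, pow_one]; exact ha

/-- A linear functional vanishing on `F²T`: the degree-3 coefficient after mapping
each generator into the span of `X` in `K[X]`. -/
lemma coeff3_vanish (g : Fin s → K[X]) (hg : ∀ i, g i ∈ Submodule.span K ({X} : Set K[X])) :
    ∀ t ∈ Ffilt K s 2, ((FreeAlgebra.lift K g) t).coeff 3 = 0 := by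
  intro t ht
  have hmap : Submodule.map (FreeAlgebra.lift K g).toLinearMap (V K s)
      ≤ Submodule.span K ({X} : Set K[X]) := by
    rw [V, Submodule.map_span, Submodule.span_le]
    rintro - ⟨-, ⟨i, rfl⟩, rfl⟩
    simpa using hg i
  have key : ∀ i : ℕ, i ≤ 2 → ∀ u ∈ Tgrade K s i,
      ((FreeAlgebra.lift K g) u).coeff 3 = 0 := by
    intro i hi u hu
    have h1 : (FreeAlgebra.lift K g) u ∈
        Submodule.map (FreeAlgebra.lift K g).toLinearMap (V K s) ^ i := by
      rw [← Submodule.map_pow]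
      exact Submodule.mem_map_of_mem hu
    have h2 : (FreeAlgebra.lift K g) u ∈ Submodule.span K ({X ^ i} : Set K[X]) := by
      have := pow_le_pow_left' hmap i
      rw [Submodule.span_pow, Set.singleton_pow] at this
      exact this h1
    obtain ⟨c, hc⟩ := Submodule.mem_span_singleton.1 h2
    rw [← hc]
    simp [coeff_smul, coeff_X_pow]
    omega
  have : Ffilt K s 2 ≤ LinearMap.ker
      ((lcoeff K 3).comp (FreeAlgebra.lift K g).toLinearMap) := by
    refine iSup₂_le fun i hi => fun u hu => ?_
    simpa using key i hi u hu
  simpa using this ht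


theorem example_P3_ne_ideal_cap_filtration (K : Type*) [Field K] :
    let x : T K 3 := FreeAlgebra.ι K 0
    let y : T K 3 := FreeAlgebra.ι K 1
    let w : T K 3 := FreeAlgebra.ι K 2
    let P : Set (T K 3) := {x ^ 2 * y - w, y ^ 3 - w}
    -- `x²w − wy² = (x²y − w)y² − x²(y³ − w)`, so `x²w − wy² ∈ ⟨P⟩`
    (x ^ 2 * w - w * y ^ 2 = (x ^ 2 * y - w) * y ^ 2 - x ^ 2 * (y ^ 3 - w)) ∧
    (x ^ 2 * w - w * y ^ 2 ∈ TwoSidedIdeal.span P) ∧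
    -- here `P_3` is just the `K`-span of `P`
    (Pk K 3 P 3 = Submodule.span K P) ∧
    -- but `x²w − wy² ∉ P_3`
    (x ^ 2 * w - w * y ^ 2 ∉ Pk K 3 P 3) ∧
    -- in particular `P_3 ≠ ⟨P⟩ ∩ F³T`
    ((Pk K 3 P 3 : Set (T K 3)) ≠
      (TwoSidedIdeal.span P : Set (T K 3)) ∩ (Ffilt K 3 3 : Set (T K 3))) := by
  intro x y w P
  have hxV : x ∈ V K 3 := iota_mem_V K 3 0
  have hyV : y ∈ V K 3 := iota_mem_V K 3 1
  have hwV : w ∈ V K 3 := iota_mem_V K 3 2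
  -- the ring identity
  have hid : x ^ 2 * w - w * y ^ 2 = (x ^ 2 * y - w) * y ^ 2 - x ^ 2 * (y ^ 3 - w) := by
    noncomm_ring
  -- membership in the two-sided ideal
  have hideal : x ^ 2 * w - w * y ^ 2 ∈ TwoSidedIdeal.span P := by
    rw [hid]
    refine TwoSidedIdeal.sub_mem _ ?_ ?_
    · exact TwoSidedIdeal.mul_mem_right _ _ _
        (TwoSidedIdeal.subset_span (Set.mem_insert _ _))
    · exact TwoSidedIdeal.mul_mem_left _ _ _
        (TwoSidedIdeal.subset_span (Set.mem_insert_of_mem _ rfl))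
  -- the generators are not in F²T
  have hXspan : ∀ i : Fin 3, (fun _ : Fin 3 => (X : K[X])) i ∈
      Submodule.span K ({X} : Set K[X]) := fun _ => Submodule.mem_span_singleton_self X
  have hnf1 : x ^ 2 * y - w ∉ (Ffilt K 3 2 : Set (T K 3)) := by
    intro h
    have := coeff3_vanish K 3 (fun _ => X) hXspan _ h
    simp [x, y, w, pow_two, FreeAlgebra.lift_ι_apply, coeff_X_pow, coeff_X, ← pow_two,
      ← pow_succ] at this
  have hnf2 : y ^ 3 - w ∉ (Ffilt K 3 2 : Set (T K 3)) := by
    intro h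
    have := coeff3_vanish K 3 (fun _ => X) hXspan _ h
    simp [y, w, FreeAlgebra.lift_ι_apply, coeff_X_pow, coeff_X] at this
  have hF12 : Ffilt K 3 1 ≤ Ffilt K 3 2 := by
    refine iSup₂_le fun i hi => Tgrade_le_Ffilt K 3 i 2 (hi.trans one_le_two)
  -- P meets F¹T and F²T trivially
  have hPF1 : P ∩ (Ffilt K 3 1 : Set (T K 3)) = ∅ := by
    rw [Set.eq_empty_iff_forall_notMem]
    rintro z ⟨hz, hzf⟩
    rcases hz with rfl | hz
    · exact hnf1 (hF12 hzf)
    · rw [Set.mem_singleton_iff] at hz; subst hz; exact hnf2 (hF12 hzf)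
  have hPF2 : P ∩ (Ffilt K 3 2 : Set (T K 3)) = ∅ := by
    rw [Set.eq_empty_iff_forall_notMem]
    rintro z ⟨hz, hzf⟩
    rcases hz with rfl | hz
    · exact hnf1 hzf
    · rw [Set.mem_singleton_iff] at hz; subst hz; exact hnf2 hzf
  -- P lies in F³T
  have hg1F3 : x ^ 2 * y - w ∈ Ffilt K 3 3 := by
    refine sub_mem ?_ ?_
    · exact Tgrade_le_Ffilt K 3 3 3 le_rfl (by rw [pow_two]; exact mem_Tgrade_three K 3 hxV hxV hyV)
    · exact Tgrade_le_Ffilt K 3 1 3 (by norm_num) (mem_Tgrade_one K 3 hwV)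
  have hg2F3 : y ^ 3 - w ∈ Ffilt K 3 3 := by
    refine sub_mem ?_ ?_
    · refine Tgrade_le_Ffilt K 3 3 3 le_rfl ?_
      rw [pow_succ, pow_two];exact mem_Tgrade_three K 3 hyV hyV hyV
    · exact Tgrade_le_Ffilt K 3 1 3 (by norm_num) (mem_Tgrade_one K 3 hwV)
  have hPF3 : P ∩ (Ffilt K 3 3 : Set (T K 3)) = P := by
    rw [Set.inter_eq_left]
    rintro z (rfl | hz)
    · exact hg1F3
    · rw [Set.mem_singleton_iff] at hz; subst hz; exact hg2F3
  -- computation of P₃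
  have hP1 : Pk K 3 P 1 = ⊥ := by
    show V K 3 * Pk K 3 P 0 + Pk K 3 P 0 * V K 3 +
      Submodule.span K (P ∩ (Ffilt K 3 1 : Set (T K 3))) = ⊥
    rw [hPF1]
    show V K 3 * ⊥ + ⊥ * V K 3 + Submodule.span K ∅ = ⊥
    simp [Submodule.mul_bot, Submodule.bot_mul, Submodule.span_empty, Submodule.add_eq_sup]
  have hP2 : Pk K 3 P 2 = ⊥ := by
    show V K 3 * Pk K 3 P 1 + Pk K 3 P 1 * V K 3 +
      Submodule.span K (P ∩ (Ffilt K 3 2 : Set (T K 3))) = ⊥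
    rw [hP1, hPF2]
    simp [Submodule.mul_bot, Submodule.bot_mul, Submodule.span_empty, Submodule.add_eq_sup]
  have hP3 : Pk K 3 P 3 = Submodule.span K P := by
    show V K 3 * Pk K 3 P 2 + Pk K 3 P 2 * V K 3 +
      Submodule.span K (P ∩ (Ffilt K 3 3 : Set (T K 3))) = Submodule.span K P
    rw [hP2, hPF3]
    simp [Submodule.mul_bot, Submodule.bot_mul, Submodule.add_eq_sup]
  -- the element is not in the span of P
  have hnmem : x ^ 2 * w - w * y ^ 2 ∉ Pk K 3 P 3 := by
    rw [hP3]
    intro hmem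
    set g : Fin 3 → K[X] := ![X, 1, X] with hgdef
    have hker : Submodule.span K P ≤ LinearMap.ker
        ((lcoeff K 3).comp (FreeAlgebra.lift K g).toLinearMap) := by
      rw [Submodule.span_le]
      rintro z (rfl | hz)
      · simp [x, y, w, FreeAlgebra.lift_ι_apply, hgdef, coeff_X_pow, coeff_X, coeff_one]
      · rw [Set.mem_singleton_iff] at hz; subst hz
        simp [y, w, FreeAlgebra.lift_ι_apply, hgdef, coeff_X_pow, coeff_X, coeff_one]
    have h0 := hker hmem
    simp [x, y, w, FreeAlgebra.lift_ι_apply, hgdef, pow_two, ← pow_succ,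
      coeff_X_pow, coeff_X, coeff_one] at h0
  -- conclusion
  refine ⟨hid, hideal, hP3, hnmem, ?_⟩
  intro heq
  have hF3 : x ^ 2 * w - w * y ^ 2 ∈ Ffilt K 3 3 := by
    refine sub_mem ?_ ?_
    · exact Tgrade_le_Ffilt K 3 3 3 le_rfl (by rw [pow_two]; exact mem_Tgrade_three K 3 hxV hxV hwV)
    · exact Tgrade_le_Ffilt K 3 3 3 le_rfl (by rw [pow_two, ← mul_assoc]; exact mem_Tgrade_three K 3 hwV hyV hyV)
  have : x ^ 2 * w - w * y ^ 2 ∈ (Pk K 3 P 3 : Set (T K 3)) := by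
    rw [heq]; exact ⟨hideal, hF3⟩
  exact hnmem this

end PBWPaper
end
end
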